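/- arXiv:2406.10945 — 2 statements merged into one kernel-verified Lean document; each statement's English description precedes it below -/
import Mathlib

section
/- Let Φκ(Z) = Σ_{i=1}^κ λ_i(Z) on Sym(p). For every Z ∈ Sym(p) and every direction H ∈ Sym(p), the directional derivative exists and equals Φκ'(Z;H) = Σ_{l=1}^{r−1} tr(Q_{θ_l}ᵀ H Q_{θ_l}) + Φ_{l_κ(Z)}(Q_{θ_r}ᵀ H Q_{θ_r}), where Q ∈ O(p) diagonalizes Z with eigenvalues in nonincreasing order. -/
/-!
Ky Fan's maximum principle writes `Φκ(X)` as the maximum of the linear functions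
`X ↦ tr(X P)` over the compact set of rank-`κ` orthogonal projections `P`. By Danskin's theorem
the one-sided derivative of such a maximum in the direction `H` is the largest value of
`tr(H P)` over the maximisers `P` at `X`. After rotating by `Q` we may take `X = diag μ`; its
maximisers are exactly `P = diag(1_{μ_i > μ_κ}) + P'`, where `P'` is a projection of rank
`l_κ(Z)` supported on the block `θ_r` of eigenvalues tied with `μ_κ` (the equality case of
`Σ μ_i P_ii ≤ Σ_{i ≤ κ} μ_i`). Maximising `tr(H P)` over these is the Ky Fan problem for
the block `(QᵀHQ)_{θ_r θ_r}`.
-/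

open Matrix Filter Topology

/-- `Φκ(Z)`: the sum of the `κ` largest eigenvalues of a symmetric matrix `Z`
(and `0` on non-Hermitian matrices). -/
noncomputable def kyFanEig (κ : ℕ) {p : ℕ} (Z : Matrix (Fin p) (Fin p) ℝ) : ℝ :=
  if hZ : Z.IsHermitian then
    ∑ i ∈ Finset.univ.filter (fun i : Fin p => (i : ℕ) < κ),
      (hZ.eigenvalues ∘ ⇑(Tuple.sort hZ.eigenvalues)) i.rev
  else 0

namespace KyFan

open Finset

def rankProjections (ι : Type*) [Fintype ι] (κ : ℕ) : Set (Matrix ι ι ℝ) :=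
  {P | P.IsSymm ∧ P * P = P ∧ P.trace = κ}

section Projection

variable {ι : Type*} [Fintype ι] {P : Matrix ι ι ℝ}

theorem diag_eq_sum_sq (hs : P.IsSymm) (hi : P * P = P) (i : ι) : P i i = ∑ j, P i j ^ 2 := by
  conv_lhs => rw [← hi, mul_apply]
  simp_rw [hs.apply i, sq]

theorem diag_nonneg (hs : P.IsSymm) (hi : P * P = P) (i : ι) : 0 ≤ P i i := by
  rw [diag_eq_sum_sq hs hi]
  positivity

theorem sq_apply_le_diag (hs : P.IsSymm) (hi : P * P = P) (i j : ι) : P i j ^ 2 ≤ P i i := by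
  rw [diag_eq_sum_sq hs hi i]
  exact single_le_sum (fun j _ => sq_nonneg (P i j)) (mem_univ j)

theorem diag_le_one (hs : P.IsSymm) (hi : P * P = P) (i : ι) : P i i ≤ 1 := by
  nlinarith [sq_apply_le_diag hs hi i i]

theorem abs_apply_le_one (hs : P.IsSymm) (hi : P * P = P) (i j : ι) : |P i j| ≤ 1 := by
  rw [← sq_le_one_iff_abs_le_one]
  exact (sq_apply_le_diag hs hi i j).trans (diag_le_one hs hi i)

theorem apply_eq_zero_of_diag_eq_zero_or_one [DecidableEq ι] (hs : P.IsSymm) (hi : P * P = P)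
    {i : ι} (h : P i i = 0 ∨ P i i = 1) {j : ι} (hj : j ≠ i) : P i j = 0 := by
  have hsum : ∑ k ∈ univ.erase i, P i k ^ 2 = P i i - P i i ^ 2 := by
    have := diag_eq_sum_sq hs hi i
    rw [← add_sum_erase _ _ (mem_univ i)] at this
    linarith
  have hzero : ∑ k ∈ univ.erase i, P i k ^ 2 = 0 := by
    rcases h with h | h <;> rw [hsum, h] <;> norm_num
  have := (sum_eq_zero_iff_of_nonneg fun k _ => sq_nonneg (P i k)).mp hzero j
    (mem_erase.mpr ⟨hj, mem_univ j⟩)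
  exact pow_eq_zero_iff two_ne_zero |>.mp this

theorem isCompact_rankProjections (κ : ℕ) : IsCompact (rankProjections ι κ) := by
  have hbox :
      IsCompact (Set.univ.pi fun _ : ι => Set.univ.pi fun _ : ι => Set.Icc (-1 : ℝ) 1) :=
    isCompact_univ_pi fun _ => isCompact_univ_pi fun _ => isCompact_Icc
  refine hbox.of_isClosed_subset ?_
    fun P ⟨hs, hi, _⟩ i _ j _ => abs_le.mp (abs_apply_le_one hs hi i j)
  have : rankProjections ι κ
      = {P : Matrix ι ι ℝ | Pᵀ = P} ∩ {P | P * P = P} ∩ {P | P.trace = κ} := by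
    ext P
    simp only [rankProjections, Matrix.IsSymm, Set.mem_inter_iff, Set.mem_ofPred_eq, and_assoc]
  rw [this]
  exact ((isClosed_eq continuous_id.matrix_transpose continuous_id).inter
    (isClosed_eq (continuous_id.matrix_mul continuous_id) continuous_id)).inter
    (isClosed_eq continuous_id.matrix_trace continuous_const)

end Projection

section Selector

variable {ι ι' : Type*} [DecidableEq ι] {e : ι' → ι}

variable (e) in
abbrev selector : Matrix ι ι' ℝ := (1 : Matrix ι ι ℝ).submatrix id e

theorem transpose_selector_mul_mul_selector [Fintype ι] (M : Matrix ι ι ℝ) :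
    (selector e)ᵀ * M * selector e = M.submatrix e e := by
  ext a b
  simp [mul_apply, one_apply]

theorem transpose_selector_mul_selector [Fintype ι] [DecidableEq ι']
    (he : Function.Injective e) : (selector e)ᵀ * selector e = (1 : Matrix ι' ι' ℝ) := by
  rw [← Matrix.mul_one (selector e)ᵀ, transpose_selector_mul_mul_selector, submatrix_one e he]

theorem selector_mul_mul_transpose_apply_apply [Fintype ι] [Fintype ι'] [DecidableEq ι']
    (he : Function.Injective e) (X : Matrix ι' ι' ℝ) (a b : ι') :
    (selector e * X * (selector e)ᵀ) (e a) (e b) = X a b := by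
  change (selector e * X * (selector e)ᵀ).submatrix e e a b = X a b
  rw [← transpose_selector_mul_mul_selector]
  simp only [Matrix.mul_assoc]
  rw [transpose_selector_mul_selector he, Matrix.mul_one, ← Matrix.mul_assoc,
    transpose_selector_mul_selector he, Matrix.one_mul]

theorem selector_mul_mul_transpose_apply_of_notMem [Fintype ι'] (X : Matrix ι' ι' ℝ) {i j : ι}
    (h : i ∉ Set.range e ∨ j ∉ Set.range e) : (selector e * X * (selector e)ᵀ) i j = 0 := by
  rcases h with h | h
  · have h' : ∀ a, i ≠ e a := fun a ha => h ⟨a, ha.symm⟩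
    simp [mul_apply, one_apply, h']
  · have h' : ∀ a, e a ≠ j := fun a ha => h ⟨a, ha⟩
    simp [mul_apply, one_apply, h']

end Selector

section Blocks

variable {ι ι' : Type*} [Fintype ι] [Fintype ι'] [DecidableEq ι']

theorem zero_mem_rankProjections : (0 : Matrix ι ι ℝ) ∈ rankProjections ι 0 := by
  simp [rankProjections, Matrix.IsSymm]

theorem add_conj_mem_rankProjections_iff {m n : ℕ} {G : Matrix ι ι ℝ} {E : Matrix ι ι' ℝ}
    (hE : Eᵀ * E = 1) (hG : G ∈ rankProjections ι m) (hGE : G * E = 0)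
    {X : Matrix ι' ι' ℝ} :
    G + E * X * Eᵀ ∈ rankProjections ι (m + n) ↔ X ∈ rankProjections ι' n := by
  obtain ⟨hGs, hGi, hGt⟩ := hG
  have hEG : Eᵀ * G = 0 := by rw [← hGs.eq, ← transpose_mul, hGE, transpose_zero]
  have hcompress : ∀ Y : Matrix ι' ι' ℝ, Eᵀ * (G + E * Y * Eᵀ) * E = Y := fun Y => by
    simp only [Matrix.mul_add, ← Matrix.mul_assoc, hEG, hE, Matrix.one_mul, zero_add]
    rw [Matrix.mul_assoc, hE, Matrix.mul_one]
  have hsq : (G + E * X * Eᵀ) * (G + E * X * Eᵀ) = G + E * (X * X) * Eᵀ := by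
    simp only [Matrix.mul_add, Matrix.add_mul, ← Matrix.mul_assoc, hGi, hGE, Matrix.zero_mul]
    simp only [Matrix.mul_assoc, hEG, hE, Matrix.mul_zero, Matrix.one_mul, add_zero, zero_add]
  have htrace : (G + E * X * Eᵀ).trace = m + X.trace := by
    rw [trace_add, hGt, trace_mul_comm, ← Matrix.mul_assoc, hE, Matrix.one_mul]
  constructor
  · rintro ⟨hs, hi, ht⟩
    refine ⟨?_, ?_, ?_⟩
    · calc Xᵀ = (Eᵀ * (G + E * X * Eᵀ) * E)ᵀ := by rw [hcompress]
        _ = Eᵀ * (G + E * X * Eᵀ) * E := by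
          rw [transpose_mul, transpose_mul, hs.eq, transpose_transpose]
          simp only [Matrix.mul_assoc]
        _ = X := hcompress X
    · rw [← hcompress (X * X), ← hsq, hi, hcompress]
    · rw [htrace, Nat.cast_add] at ht
      linarith
  · rintro ⟨hs, hi, ht⟩
    refine ⟨?_, by rw [hsq, hi], by rw [htrace, ht, Nat.cast_add]⟩
    rw [Matrix.IsSymm, transpose_add, hGs.eq, transpose_mul, transpose_mul, transpose_transpose,
      hs.eq, Matrix.mul_assoc]

theorem conj_mem_rankProjections_iff {n : ℕ} {E : Matrix ι ι' ℝ} (hE : Eᵀ * E = 1)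
    {X : Matrix ι' ι' ℝ} :
    E * X * Eᵀ ∈ rankProjections ι n ↔ X ∈ rankProjections ι' n := by
  simpa using add_conj_mem_rankProjections_iff (n := n) hE zero_mem_rankProjections
    (Matrix.zero_mul E)

theorem eq_diagonal_add_conj_submatrix [DecidableEq ι] {P : Matrix ι ι ℝ} (hs : P.IsSymm)
    (hi : P * P = P) {e : ι' → ι} (he : Function.Injective e) {g : ι → ℝ}
    (hg : ∀ i, g i = 0 ∨ g i = 1) (hge : ∀ a, g (e a) = 0)
    (hPg : ∀ i ∉ Set.range e, P i i = g i) :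
    P = diagonal g + selector e * P.submatrix e e * (selector e)ᵀ := by
  have hrow : ∀ i ∉ Set.range e, ∀ j, P i j = diagonal g i j := by
    intro i hie j
    rcases eq_or_ne j i with rfl | hji
    · rw [diagonal_apply_eq, hPg j hie]
    · rw [diagonal_apply_ne _ hji.symm,
        apply_eq_zero_of_diag_eq_zero_or_one hs hi (hPg i hie ▸ hg i) hji]
  ext i j
  rw [Matrix.add_apply]
  by_cases hij : i ∈ Set.range e ∧ j ∈ Set.range e
  · obtain ⟨⟨a, rfl⟩, ⟨b, rfl⟩⟩ := hij
    rw [selector_mul_mul_transpose_apply_apply he, submatrix_apply, diagonal_apply]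
    split_ifs <;> simp [hge]
  · rw [selector_mul_mul_transpose_apply_of_notMem _ (not_and_or.mp hij), add_zero]
    rcases not_and_or.mp hij with hie | hje
    · exact hrow i hie j
    · rw [← hs.apply, hrow j hje i, ← transpose_apply (diagonal g), diagonal_transpose]

end Blocks

section Diagonal

variable {ι : Type*} [Fintype ι] [DecidableEq ι]

theorem trace_diagonal_mul (ρ : ι → ℝ) (P : Matrix ι ι ℝ) :
    (diagonal ρ * P).trace = ∑ i, ρ i * P i i := by
  simp [trace, diagonal_mul]

theorem trace_mul_diagonal_add_conj {ι' : Type*} [Fintype ι'] (B : Matrix ι ι ℝ)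
    (g : ι → ℝ) (E : Matrix ι ι' ℝ) (X : Matrix ι' ι' ℝ) :
    (B * (diagonal g + E * X * Eᵀ)).trace = ∑ i, g i * B i i + (Eᵀ * B * E * X).trace := by
  rw [Matrix.mul_add, trace_add, trace_mul_comm, trace_diagonal_mul, ← Matrix.mul_assoc,
    trace_mul_comm, ← Matrix.mul_assoc, ← Matrix.mul_assoc]

variable {S : Finset ι} {ρ d : ι → ℝ} {c : ℝ}

theorem sum_sub_sum_mul_eq (c : ℝ) (hd : ∑ i, d i = #S) :
    ∑ i ∈ S, ρ i - ∑ i, ρ i * d i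
      = ∑ i ∈ S, (ρ i - c) * (1 - d i) + ∑ i ∈ Sᶜ, (c - ρ i) * d i := by
  rw [← sum_add_sum_compl S] at hd
  rw [← sum_add_sum_compl S (fun i => ρ i * d i)]
  simp only [mul_sub, sub_mul, mul_one, sum_sub_distrib, ← mul_sum, sum_const, nsmul_eq_mul]
  linear_combination (-c) * hd

theorem sum_mul_le_sum_of_threshold (hS : ∀ i ∈ S, c ≤ ρ i) (hSc : ∀ i ∉ S, ρ i ≤ c)
    (hd0 : ∀ i, 0 ≤ d i) (hd1 : ∀ i, d i ≤ 1) (hd : ∑ i, d i = #S) :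
    ∑ i, ρ i * d i ≤ ∑ i ∈ S, ρ i := by
  have h := sum_sub_sum_mul_eq (ρ := ρ) c hd
  have h₁ : 0 ≤ ∑ i ∈ S, (ρ i - c) * (1 - d i) :=
    sum_nonneg fun i hi => mul_nonneg (by linarith [hS i hi]) (by linarith [hd1 i])
  have h₂ : 0 ≤ ∑ i ∈ Sᶜ, (c - ρ i) * d i :=
    sum_nonneg fun i hi => mul_nonneg (by linarith [hSc i (mem_compl.mp hi)]) (hd0 i)
  linarith

theorem eq_one_or_eq_zero_of_sum_mul_eq_sum (hS : ∀ i ∈ S, c ≤ ρ i)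
    (hSc : ∀ i ∉ S, ρ i ≤ c) (hd0 : ∀ i, 0 ≤ d i) (hd1 : ∀ i, d i ≤ 1)
    (hd : ∑ i, d i = #S) (heq : ∑ i, ρ i * d i = ∑ i ∈ S, ρ i) (i : ι) :
    (c < ρ i → d i = 1) ∧ (ρ i < c → d i = 0) := by
  have h := sum_sub_sum_mul_eq (ρ := ρ) c hd
  have h₁ : ∀ i ∈ S, 0 ≤ (ρ i - c) * (1 - d i) :=
    fun i hi => mul_nonneg (by linarith [hS i hi]) (by linarith [hd1 i])
  have h₂ : ∀ i ∈ Sᶜ, 0 ≤ (c - ρ i) * d i :=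
    fun i hi => mul_nonneg (by linarith [hSc i (mem_compl.mp hi)]) (hd0 i)
  have hz₁ := (sum_eq_zero_iff_of_nonneg h₁).mp (by linarith [sum_nonneg h₁, sum_nonneg h₂])
  have hz₂ := (sum_eq_zero_iff_of_nonneg h₂).mp (by linarith [sum_nonneg h₁, sum_nonneg h₂])
  constructor
  · intro hi
    have hiS : i ∈ S := by_contra fun h => (hSc i h).not_gt hi
    rcases mul_eq_zero.mp (hz₁ i hiS) with h | h <;> linarith
  · intro hi
    have hiS : i ∈ Sᶜ := mem_compl.mpr fun h => (hS i h).not_gt hi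
    rcases mul_eq_zero.mp (hz₂ i hiS) with h | h <;> linarith

theorem indicator_diagonal_mem_rankProjections (S : Finset ι) :
    diagonal (fun i => if i ∈ S then (1 : ℝ) else 0) ∈ rankProjections ι #S := by
  refine ⟨isSymm_diagonal _, ?_, by rw [trace_diagonal, sum_boole, filter_mem_eq_inter,
    univ_inter]⟩
  rw [diagonal_mul_diagonal]
  congr 1 with i
  split_ifs <;> norm_num

theorem isGreatest_trace_diagonal_mul (hS : ∀ i ∈ S, c ≤ ρ i)
    (hSc : ∀ i ∉ S, ρ i ≤ c) :
    IsGreatest ((fun P => (diagonal ρ * P).trace) '' rankProjections ι #S)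
      (∑ i ∈ S, ρ i) := by
  refine ⟨⟨_, indicator_diagonal_mem_rankProjections S, by simp⟩, ?_⟩
  rintro _ ⟨P, ⟨hs, hi, ht⟩, rfl⟩
  simp only [trace_diagonal_mul]
  exact sum_mul_le_sum_of_threshold hS hSc (diag_nonneg hs hi) (diag_le_one hs hi) ht

end Diagonal

section IsThreshold

variable {p κ : ℕ} {μ : Fin p → ℝ} {c : ℝ}

def IsThreshold (κ : ℕ) (μ : Fin p → ℝ) (c : ℝ) : Prop :=
  (∀ i : Fin p, (i : ℕ) < κ → c ≤ μ i) ∧ ∀ i : Fin p, κ ≤ (i : ℕ) → μ i ≤ c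

theorem exists_isThreshold (hκp : κ ≤ p) (hμ : Antitone μ) : ∃ c, IsThreshold κ μ c := by
  rcases Nat.eq_zero_or_pos κ with rfl | hκ
  · refine ⟨∑ i, |μ i|, fun i hi => absurd hi (Nat.not_lt_zero _), fun i _ => ?_⟩
    exact (le_abs_self _).trans (single_le_sum (fun j _ => abs_nonneg (μ j)) (mem_univ i))
  · refine ⟨μ ⟨κ - 1, by omega⟩, fun i hi => hμ ?_, fun i hi => hμ ?_⟩ <;>
      simp only [Fin.le_iff_val_le_val] <;> omega

theorem isGreatest_trace_diagonal_mul_of_isThreshold (hκp : κ ≤ p) (hc : IsThreshold κ μ c) :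
    IsGreatest ((fun P => (diagonal μ * P).trace) '' rankProjections (Fin p) κ)
      (∑ i ∈ univ.filter (fun i : Fin p => (i : ℕ) < κ), μ i) := by
  have := isGreatest_trace_diagonal_mul (S := univ.filter fun i : Fin p => (i : ℕ) < κ)
    (fun i hi => hc.1 i (by simpa using hi)) (fun i hi => hc.2 i (by simpa using hi))
  rwa [Fin.card_filter_val_lt, min_eq_right hκp] at this

noncomputable def aboveSet (μ : Fin p → ℝ) (c : ℝ) : Finset (Fin p) :=
  univ.filter fun i => c < μ i

noncomputable def tieSet (μ : Fin p → ℝ) (c : ℝ) : Finset (Fin p) :=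
  univ.filter fun i => μ i = c

@[simp]
theorem mem_aboveSet {i : Fin p} : i ∈ aboveSet μ c ↔ c < μ i := by simp [aboveSet]

@[simp]
theorem mem_tieSet {i : Fin p} : i ∈ tieSet μ c ↔ μ i = c := by simp [tieSet]

theorem aboveSet_subset_of_isThreshold (hc : IsThreshold κ μ c) :
    aboveSet μ c ⊆ univ.filter (fun i : Fin p => (i : ℕ) < κ) := fun i hi =>
  mem_filter.mpr ⟨mem_univ i,
    by_contra fun h => (hc.2 i (not_lt.mp h)).not_gt (mem_aboveSet.mp hi)⟩

theorem sdiff_aboveSet_subset_tieSet (hc : IsThreshold κ μ c) :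
    univ.filter (fun i : Fin p => (i : ℕ) < κ) \ aboveSet μ c ⊆ tieSet μ c := by
  intro i hi
  rw [Finset.mem_sdiff, mem_filter, mem_aboveSet, not_lt] at hi
  exact mem_tieSet.mpr (le_antisymm hi.2 (hc.1 i hi.1.2))

theorem card_sdiff_aboveSet (hκp : κ ≤ p) (hc : IsThreshold κ μ c) :
    #(univ.filter (fun i : Fin p => (i : ℕ) < κ) \ aboveSet μ c) = κ - #(aboveSet μ c) := by
  rw [card_sdiff_of_subset (aboveSet_subset_of_isThreshold hc), Fin.card_filter_val_lt,
    min_eq_right hκp]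

theorem card_aboveSet_le (hκp : κ ≤ p) (hc : IsThreshold κ μ c) :
    #(aboveSet μ c) ≤ κ := by
  have := card_le_card (aboveSet_subset_of_isThreshold hc)
  rwa [Fin.card_filter_val_lt, min_eq_right hκp] at this

theorem sub_card_aboveSet_le_card_tieSet (hκp : κ ≤ p) (hc : IsThreshold κ μ c) :
    κ - #(aboveSet μ c) ≤ #(tieSet μ c) :=
  card_sdiff_aboveSet hκp hc ▸ card_le_card (sdiff_aboveSet_subset_tieSet hc)

theorem sum_filter_lt_of_isThreshold (hκp : κ ≤ p) (hc : IsThreshold κ μ c) :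
    ∑ i ∈ univ.filter (fun i : Fin p => (i : ℕ) < κ), μ i
      = ∑ i ∈ aboveSet μ c, μ i + (κ - #(aboveSet μ c) : ℕ) * c := by
  rw [← sum_sdiff (aboveSet_subset_of_isThreshold hc), add_comm, ← card_sdiff_aboveSet hκp hc,
    sum_congr rfl fun i hi => mem_tieSet.mp (sdiff_aboveSet_subset_tieSet hc hi), sum_const,
    nsmul_eq_mul]

end IsThreshold

theorem exists_antitone_decomposition {p : ℕ} {X : Matrix (Fin p) (Fin p) ℝ} (hX : X.IsSymm) :
    ∃ (R : Matrix (Fin p) (Fin p) ℝ) (ρ : Fin p → ℝ), Rᵀ * R = 1 ∧ Antitone ρ ∧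
      X = R * diagonal ρ * Rᵀ ∧
      ∀ κ, kyFanEig κ X = ∑ i ∈ univ.filter (fun i : Fin p => (i : ℕ) < κ), ρ i := by
  have hX' : X.IsHermitian := by
    rwa [Matrix.IsHermitian, conjTranspose_eq_transpose_of_trivial]
  set U : Matrix (Fin p) (Fin p) ℝ := ↑hX'.eigenvectorUnitary
  have hU : Uᵀ * U = 1 := by
    simpa [star_eq_conjTranspose] using (Unitary.mem_iff.mp hX'.eigenvectorUnitary.2).1
  have hXU : X = U * diagonal hX'.eigenvalues * Uᵀ := by
    simpa [Unitary.conjStarAlgAut_apply, star_eq_conjTranspose] using hX'.spectral_theorem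
  set σ : Equiv.Perm (Fin p) := Fin.revPerm.trans (Tuple.sort hX'.eigenvalues)
  refine ⟨U.submatrix id σ, hX'.eigenvalues ∘ σ, ?_, ?_, ?_,
    fun κ => by rw [kyFanEig, dif_pos hX']; rfl⟩
  · rw [transpose_submatrix, ← submatrix_mul _ _ _ _ _ Function.bijective_id, hU,
      submatrix_one_equiv]
  · exact fun a b hab => Tuple.monotone_sort hX'.eigenvalues (Fin.rev_le_rev.mpr hab)
  · rw [← submatrix_diagonal_equiv, transpose_submatrix, submatrix_mul_equiv,
      submatrix_mul_equiv, submatrix_id_id]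
    exact hXU

theorem image_trace_conj {ι : Type*} [Fintype ι] [DecidableEq ι] {R : Matrix ι ι ℝ}
    (hR : Rᵀ * R = 1) (X : Matrix ι ι ℝ) (κ : ℕ) :
    (fun P => (R * X * Rᵀ * P).trace) '' rankProjections ι κ
      = (fun P => (X * P).trace) '' rankProjections ι κ := by
  have hRR : R * Rᵀ = 1 := mul_eq_one_comm.mp hR
  have hconj : (fun P => Rᵀ * P * R) '' rankProjections ι κ = rankProjections ι κ := by
    refine Set.Subset.antisymm ?_ fun P hP => ⟨R * P * Rᵀ, ?_, ?_⟩
    · rintro _ ⟨P, hP, rfl⟩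
      simpa using (conj_mem_rankProjections_iff (E := Rᵀ) (by simpa using hRR)).mpr hP
    · exact (conj_mem_rankProjections_iff hR).mpr hP
    · simp only [← Matrix.mul_assoc, hR, Matrix.one_mul]
      rw [Matrix.mul_assoc, hR, Matrix.mul_one]
  conv_rhs => rw [← hconj, Set.image_image]
  congr 1 with P
  rw [Matrix.mul_assoc, Matrix.mul_assoc, trace_mul_comm, Matrix.mul_assoc, Matrix.mul_assoc]

/-- Ky Fan's maximum principle. -/
theorem isGreatest_kyFanEig {p κ : ℕ} (hκp : κ ≤ p) {X : Matrix (Fin p) (Fin p) ℝ}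
    (hX : X.IsSymm) :
    IsGreatest ((fun P => (X * P).trace) '' rankProjections (Fin p) κ) (kyFanEig κ X) := by
  obtain ⟨R, ρ, hR, hρ, rfl, hval⟩ := exists_antitone_decomposition hX
  obtain ⟨c, hc⟩ := exists_isThreshold hκp hρ
  rw [image_trace_conj hR, hval]
  exact isGreatest_trace_diagonal_mul_of_isThreshold hκp hc

theorem kyFanEig_conj {p κ : ℕ} (hκp : κ ≤ p) {R X : Matrix (Fin p) (Fin p) ℝ}
    (hR : Rᵀ * R = 1) (hX : X.IsSymm) : kyFanEig κ (R * X * Rᵀ) = kyFanEig κ X := by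
  have hRX : (R * X * Rᵀ).IsSymm := by
    rw [Matrix.IsSymm, transpose_mul, transpose_mul, transpose_transpose, hX.eq, Matrix.mul_assoc]
  refine (isGreatest_kyFanEig hκp hRX).unique ?_
  rw [image_trace_conj hR]
  exact isGreatest_kyFanEig hκp hX

/-- Danskin's theorem. -/
theorem tendsto_sSup_image_add_mul {α : Type*} [TopologicalSpace α] {K : Set α}
    (hK : IsCompact K) {a b : α → ℝ} (ha : Continuous a) (hb : Continuous b) {L : ℝ}
    (hL : IsGreatest (b '' {P ∈ K | IsMaxOn a K P}) L) :
    Tendsto (fun t : ℝ => (sSup ((fun P => a P + t * b P) '' K) - sSup (a '' K)) / t)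
      (𝓝[>] 0) (𝓝 L) := by
  obtain ⟨⟨P₀, ⟨hP₀K, hP₀max⟩, rfl⟩, hL⟩ := hL
  have hsup₀ : sSup (a '' K) = a P₀ :=
    (IsGreatest.csSup_eq ⟨Set.mem_image_of_mem a hP₀K, Set.forall_mem_image.mpr hP₀max⟩)
  rw [tendsto_order]
  constructor
  · intro l hl
    filter_upwards [self_mem_nhdsWithin] with t (ht : 0 < t)
    rw [lt_div_iff₀ ht, hsup₀]
    have : a P₀ + t * b P₀ ≤ sSup ((fun P => a P + t * b P) '' K) :=
      le_csSup ((hK.image (ha.add (continuous_const.mul hb))).bddAbove)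
        (Set.mem_image_of_mem _ hP₀K)
    nlinarith
  · intro u hu
    obtain ⟨u', hLu', hu'u⟩ := exists_between hu
    -- on the compact set where `b ≥ u'`, `a` stays a fixed `δ` below its maximum
    have hC : IsCompact (K ∩ b ⁻¹' Set.Ici u') := hK.inter_right (isClosed_Ici.preimage hb)
    obtain ⟨δ, hδ, hδC⟩ := hC.exists_forall_le' (f := fun P => a P₀ - a P)
      (continuous_const.sub ha).continuousOn (a := 0) fun P ⟨hPK, hPb⟩ => by
        by_contra! hle
        have hmax : IsMaxOn a K P := fun Q hQ => (hP₀max hQ).trans (by simpa using hle)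
        exact (hL ⟨P, ⟨hPK, hmax⟩, rfl⟩).not_gt (hLu'.trans_le hPb)
    obtain ⟨M, hM⟩ := (hK.image hb).bddAbove
    have hsmall : ∀ᶠ t in 𝓝[>] (0 : ℝ), t * (M - u') < δ := by
      have : Tendsto (fun t : ℝ => t * (M - u')) (𝓝[>] 0) (𝓝 0) := by
        simpa using (tendsto_id.mul_const (M - u')).mono_left (nhdsWithin_le_nhds (a := (0 : ℝ)))
      exact this.eventually_lt_const hδ
    filter_upwards [self_mem_nhdsWithin, hsmall] with t (ht : 0 < t) htδ
    rw [div_lt_iff₀ ht, hsup₀]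
    suffices sSup ((fun P => a P + t * b P) '' K) ≤ a P₀ + t * u' by nlinarith
    refine csSup_le (Set.image_nonempty.mpr ⟨P₀, hP₀K⟩) ?_
    rintro _ ⟨P, hPK, rfl⟩
    have haP : a P ≤ a P₀ := hP₀max hPK
    by_cases hPb : u' ≤ b P
    · have h₁ := hδC P ⟨hPK, hPb⟩
      have h₂ := hM ⟨P, hPK, rfl⟩
      dsimp only at h₁ ⊢
      nlinarith
    · dsimp only
      nlinarith

section Maximisers

variable {p κ : ℕ} {μ : Fin p → ℝ} {c : ℝ}

noncomputable def tieIndex (μ : Fin p → ℝ) (c : ℝ) : Fin #(tieSet μ c) ↪o Fin p :=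
  (tieSet μ c).orderEmbOfFin rfl

theorem apply_tieIndex (a : Fin #(tieSet μ c)) : μ (tieIndex μ c a) = c :=
  mem_tieSet.mp (orderEmbOfFin_mem _ rfl a)

theorem mem_range_tieIndex {i : Fin p} : i ∈ Set.range (tieIndex μ c) ↔ μ i = c := by
  simp [tieIndex]

noncomputable def aboveProjection (μ : Fin p → ℝ) (c : ℝ) : Matrix (Fin p) (Fin p) ℝ :=
  diagonal fun i => if i ∈ aboveSet μ c then 1 else 0

theorem aboveProjection_mul_selector_tieIndex :
    aboveProjection μ c * selector (tieIndex μ c) = 0 := by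
  ext i a
  by_cases h : i = tieIndex μ c a
  · simp [aboveProjection, h, apply_tieIndex]
  · simp [aboveProjection, one_apply, h]

noncomputable def extendTieBlock (μ : Fin p → ℝ) (c : ℝ)
    (X : Matrix (Fin #(tieSet μ c)) (Fin #(tieSet μ c)) ℝ) : Matrix (Fin p) (Fin p) ℝ :=
  aboveProjection μ c + selector (tieIndex μ c) * X * (selector (tieIndex μ c))ᵀ

theorem trace_mul_extendTieBlock (B : Matrix (Fin p) (Fin p) ℝ)
    (X : Matrix (Fin #(tieSet μ c)) (Fin #(tieSet μ c)) ℝ) :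
    (B * extendTieBlock μ c X).trace
      = ∑ i ∈ aboveSet μ c, B i i
        + (B.submatrix (tieIndex μ c) (tieIndex μ c) * X).trace := by
  rw [extendTieBlock, aboveProjection, trace_mul_diagonal_add_conj,
    transpose_selector_mul_mul_selector]
  simp [ite_mul, aboveSet, sum_filter]

theorem extendTieBlock_mem_rankProjections_iff (hκp : κ ≤ p) (hc : IsThreshold κ μ c)
    {X : Matrix (Fin #(tieSet μ c)) (Fin #(tieSet μ c)) ℝ} :
    extendTieBlock μ c X ∈ rankProjections (Fin p) κ
      ↔ X ∈ rankProjections _ (κ - #(aboveSet μ c)) := by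
  have := add_conj_mem_rankProjections_iff (X := X) (n := κ - #(aboveSet μ c))
    (transpose_selector_mul_selector (tieIndex μ c).injective)
    (indicator_diagonal_mem_rankProjections _) aboveProjection_mul_selector_tieIndex
  rwa [Nat.add_sub_cancel' (card_aboveSet_le hκp hc)] at this

theorem isMaxOn_trace_diagonal_mul_iff (hκp : κ ≤ p) (hc : IsThreshold κ μ c)
    {P : Matrix (Fin p) (Fin p) ℝ} (hP : P ∈ rankProjections (Fin p) κ) :
    IsMaxOn (fun P => (diagonal μ * P).trace) (rankProjections (Fin p) κ) P
      ↔ (diagonal μ * P).trace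
        = ∑ i ∈ univ.filter (fun i : Fin p => (i : ℕ) < κ), μ i := by
  obtain ⟨⟨P₀, hP₀, hP₀v⟩, hv⟩ := isGreatest_trace_diagonal_mul_of_isThreshold hκp hc
  exact ⟨fun hmax => le_antisymm (hv ⟨P, hP, rfl⟩) (hP₀v ▸ hmax hP₀),
    fun h Q hQ => (hv ⟨Q, hQ, rfl⟩).trans h.ge⟩

theorem eq_extendTieBlock_of_isMaxOn (hκp : κ ≤ p) (hc : IsThreshold κ μ c)
    {P : Matrix (Fin p) (Fin p) ℝ} (hP : P ∈ rankProjections (Fin p) κ)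
    (hmax : IsMaxOn (fun P => (diagonal μ * P).trace) (rankProjections (Fin p) κ) P) :
    P = extendTieBlock μ c (P.submatrix (tieIndex μ c) (tieIndex μ c)) := by
  have hPv := (isMaxOn_trace_diagonal_mul_iff hκp hc hP).mp hmax
  obtain ⟨hs, hi, ht⟩ := hP
  have hdiag := eq_one_or_eq_zero_of_sum_mul_eq_sum
    (S := univ.filter fun i : Fin p => (i : ℕ) < κ) (fun i hi => hc.1 i (by simpa using hi))
    (fun i hi => hc.2 i (by simpa using hi)) (diag_nonneg hs hi) (diag_le_one hs hi)
    (by rw [Fin.card_filter_val_lt, min_eq_right hκp]; exact ht)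
    (by rw [← trace_diagonal_mul]; exact hPv)
  refine eq_diagonal_add_conj_submatrix hs hi (tieIndex μ c).injective
    (fun i => by split_ifs <;> simp) (fun a => by simp [apply_tieIndex]) fun i hie => ?_
  rcases lt_or_gt_of_ne (Ne.symm (mt mem_range_tieIndex.mpr hie)) with h | h
  · simp [h, (hdiag i).1 h]
  · simp [h.not_gt, (hdiag i).2 h]

theorem setOf_isMaxOn_trace_diagonal_mul (hκp : κ ≤ p) (hc : IsThreshold κ μ c) :
    {P ∈ rankProjections (Fin p) κ |
        IsMaxOn (fun P => (diagonal μ * P).trace) (rankProjections (Fin p) κ) P}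
      = extendTieBlock μ c '' rankProjections (Fin #(tieSet μ c)) (κ - #(aboveSet μ c)) := by
  ext P
  constructor
  · rintro ⟨hP, hmax⟩
    have hPeq := eq_extendTieBlock_of_isMaxOn hκp hc hP hmax
    exact ⟨_, (extendTieBlock_mem_rankProjections_iff hκp hc).mp (hPeq ▸ hP), hPeq.symm⟩
  · rintro ⟨X, hX, rfl⟩
    have hXK := (extendTieBlock_mem_rankProjections_iff hκp hc).mpr hX
    refine ⟨hXK, (isMaxOn_trace_diagonal_mul_iff hκp hc hXK).mpr ?_⟩
    rw [trace_mul_extendTieBlock, submatrix_diagonal _ _ (tieIndex μ c).injective,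
      trace_diagonal_mul, sum_filter_lt_of_isThreshold hκp hc]
    simp only [diagonal_apply_eq, Function.comp_apply, apply_tieIndex, ← mul_sum]
    rw [show ∑ a, X a a = X.trace from rfl, hX.2.2, mul_comm]

theorem isGreatest_trace_mul_of_isMaxOn (hκp : κ ≤ p) (hc : IsThreshold κ μ c)
    {B : Matrix (Fin p) (Fin p) ℝ} (hB : B.IsSymm) :
    IsGreatest ((fun P => (B * P).trace) '' {P ∈ rankProjections (Fin p) κ |
        IsMaxOn (fun P => (diagonal μ * P).trace) (rankProjections (Fin p) κ) P})
      (∑ i ∈ aboveSet μ c, B i i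
        + kyFanEig (κ - #(aboveSet μ c)) (B.submatrix (tieIndex μ c) (tieIndex μ c))) := by
  have hBθ : (B.submatrix (tieIndex μ c) (tieIndex μ c)).IsSymm := by
    rw [Matrix.IsSymm, transpose_submatrix, hB.eq]
  rw [setOf_isMaxOn_trace_diagonal_mul hκp hc, Set.image_image]
  simp only [trace_mul_extendTieBlock]
  simpa [Set.image_image] using (monotone_id.const_add _).map_isGreatest
    (isGreatest_kyFanEig (sub_card_aboveSet_le_card_tieSet hκp hc) hBθ)

theorem tendsto_kyFanEig_diagonal_add_smul (hκp : κ ≤ p) (hc : IsThreshold κ μ c)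
    {B : Matrix (Fin p) (Fin p) ℝ} (hB : B.IsSymm) :
    Tendsto (fun t : ℝ => (kyFanEig κ (diagonal μ + t • B) - kyFanEig κ (diagonal μ)) / t)
      (𝓝[>] 0)
      (𝓝 (∑ i ∈ aboveSet μ c, B i i
        + kyFanEig (κ - #(aboveSet μ c)) (B.submatrix (tieIndex μ c) (tieIndex μ c)))) := by
  have hF : ∀ t : ℝ, kyFanEig κ (diagonal μ + t • B) = sSup ((fun P =>
      (diagonal μ * P).trace + t * (B * P).trace) '' rankProjections (Fin p) κ) := fun t => by
    rw [← (isGreatest_kyFanEig hκp ((isSymm_diagonal μ).add (hB.smul t))).csSup_eq]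
    simp only [Matrix.add_mul, trace_add, Matrix.smul_mul, trace_smul, smul_eq_mul]
  have hF₀ : kyFanEig κ (diagonal μ) = sSup ((fun P => (diagonal μ * P).trace) ''
      rankProjections (Fin p) κ) :=
    (isGreatest_kyFanEig hκp (isSymm_diagonal μ)).csSup_eq.symm
  simp only [hF, hF₀]
  exact tendsto_sSup_image_add_mul (isCompact_rankProjections κ)
    (continuous_const.matrix_mul continuous_id).matrix_trace
    (continuous_const.matrix_mul continuous_id).matrix_trace
    (isGreatest_trace_mul_of_isMaxOn hκp hc hB)

end Maximisers

end KyFan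

open KyFan

/-- Directional differentiability of `Φκ`: with an ordered eigendecomposition
`Z = Q Diag(μ) Qᵀ`, for every symmetric `H` the one-sided directional derivative of `Φκ` at
`Z` in direction `H` exists and equals
`Σ_{i : μ_i > μ_κ} (Qᵀ H Q)_{ii} + Φ_{l_κ(Z)}((Qᵀ H Q)_{θ_r θ_r})`, where `θ_r` is the set
of indices tied with `μ_κ` and `l_κ(Z) = κ − #{i : μ_i > μ_κ}`. -/
theorem kyFanEig_directional_derivative (p κ : ℕ) (hκ1 : 1 ≤ κ) (hκp : κ ≤ p)
    (Z Q : Matrix (Fin p) (Fin p) ℝ) (μ : Fin p → ℝ)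
    (hQ : Qᵀ * Q = 1) (hμ : Antitone μ)
    (hZ : Z = Q * Matrix.diagonal μ * Qᵀ)
    (H : Matrix (Fin p) (Fin p) ℝ) (hH : H.IsSymm) :
    Filter.Tendsto
      (fun t : ℝ => (kyFanEig κ (Z + t • H) - kyFanEig κ Z) / t)
      (nhdsWithin (0 : ℝ) (Set.Ioi 0))
      (nhds
        ((∑ i ∈ Finset.univ.filter (fun i : Fin p => μ (⟨κ - 1, by omega⟩ : Fin p) < μ i),
            (Qᵀ * H * Q) i i)
          + kyFanEig
              (κ - (Finset.univ.filter
                  (fun i : Fin p => μ (⟨κ - 1, by omega⟩ : Fin p) < μ i)).card)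
              (Matrix.of fun
                  (i j : Fin ((Finset.univ.filter
                    (fun i : Fin p => μ i = μ (⟨κ - 1, by omega⟩ : Fin p))).card)) =>
                (Qᵀ * H * Q)
                  (((Finset.univ.filter
                      (fun i : Fin p => μ i = μ (⟨κ - 1, by omega⟩ : Fin p))).orderIsoOfFin
                      rfl i : Fin p))
                  (((Finset.univ.filter
                      (fun i : Fin p => μ i = μ (⟨κ - 1, by omega⟩ : Fin p))).orderIsoOfFin
                      rfl j : Fin p))))) := by
  have hQQ : Q * Qᵀ = 1 := mul_eq_one_comm.mp hQ
  have hB : (Qᵀ * H * Q).IsSymm := by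
    rw [Matrix.IsSymm, transpose_mul, transpose_mul, transpose_transpose, hH.eq, Matrix.mul_assoc]
  have hc : IsThreshold κ μ (μ ⟨κ - 1, by omega⟩) :=
    ⟨fun i hi => hμ (Fin.le_iff_val_le_val.mpr (by simp; omega)),
      fun i hi => hμ (Fin.le_iff_val_le_val.mpr (by simp; omega))⟩
  have hrot : ∀ t : ℝ,
      kyFanEig κ (Z + t • H) = kyFanEig κ (diagonal μ + t • (Qᵀ * H * Q)) := fun t => by
    rw [← kyFanEig_conj hκp hQ ((isSymm_diagonal μ).add (hB.smul t)), hZ, Matrix.mul_add,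
      Matrix.add_mul, Matrix.mul_smul, Matrix.smul_mul]
    congr 3
    calc H = Q * Qᵀ * H * (Q * Qᵀ) := by rw [hQQ, Matrix.one_mul, Matrix.mul_one]
      _ = Q * (Qᵀ * H * Q) * Qᵀ := by simp only [Matrix.mul_assoc]
  have hrot₀ : kyFanEig κ Z = kyFanEig κ (diagonal μ) := by simpa using hrot 0
  simp only [hrot, hrot₀]
  exact tendsto_kyFanEig_diagonal_add_smul hκp hc hB
end

section
/- Let φ : X → ℝ be twice continuously differentiable with ∇²φ positive semidefinite on an open neighborhood N of x̄, and let g : X → ℝ ∪ {+∞} be proper lsc convex; set f = φ + g. If x̄ is a local minimizer of f that fails the condition: for all sequences (x^k, v^k) ∈ gph ∂f with x^k ∈ N, (x^k, v^k) → (x̄, 0), and unit vectors w^k → w with ⟨w^k, ∇²φ(x^k)w^k⟩ + d²g(x^k | v^k − ∇φ(x^k))(w^k) < (1/k), then the limit w satisfies both ∇²φ(x̄)w = 0 and there exist (x^k, y^k) ∈ gph ∂g, w^k → w with (x^k, y^k) → (x̄, −∇φ(x̄)) and d²g(x^k|y^k)(w^k) → 0. -/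
/-!
Both summands in the hypothesis on `(xᵏ, vᵏ, wᵏ)` are nonnegative: the Hessian because it is
positive semidefinite on `N`, and the second subderivative because `vᵏ - ∇φ(xᵏ)` is a subgradient,
which makes every difference quotient in its liminf nonnegative. Hence both tend to `0`. By
continuity of `∇²φ` the quadratic form of `∇²φ(x̄)` vanishes at `w`, and Cauchy–Schwarz for the
positive semidefinite symmetric form `∇²φ(x̄)` puts `w` in its kernel. The given sequences, with
`yᵏ = vᵏ - ∇φ(xᵏ) → -∇φ(x̄)`, witness the second claim.
-/

open Filter Topology

/-- The second subderivative of `g` at `x` for `v`, evaluated at `w`. -/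
noncomputable def secondSubderiv {X : Type*} [NormedAddCommGroup X] [InnerProductSpace ℝ X]
    (g : X → EReal) (x v w : X) : EReal :=
  Filter.liminf
    (fun p : ℝ × X =>
      ((2 / p.1 ^ 2 : ℝ) : EReal) *
        (g (x + p.1 • p.2) - g x - ((p.1 * (inner ℝ v p.2 : ℝ) : ℝ) : EReal)))
    ((nhdsWithin (0 : ℝ) (Set.Ioi 0)) ×ˢ (nhds w))

/-- The convex-analysis subdifferential of `g` at `x`. -/
def convexSubdiff {X : Type*} [NormedAddCommGroup X] [InnerProductSpace ℝ X]
    (g : X → EReal) (x : X) : Set X :=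
  { v | ∀ y, g x + ((inner ℝ v (y - x) : ℝ) : EReal) ≤ g y }

section Subgradient

variable {X : Type*} [NormedAddCommGroup X] [InnerProductSpace ℝ X] {g : X → EReal} {x v : X}

lemma ne_top_of_mem_convexSubdiff {y : X} (hv : v ∈ convexSubdiff g x) (hy : g y ≠ ⊤) :
    g x ≠ ⊤ := by
  intro hx
  have := hv y
  rw [hx, EReal.top_add_coe, top_le_iff] at this
  exact hy this

lemma secondSubderiv_nonneg_of_mem_convexSubdiff (hbot : g x ≠ ⊥) (htop : g x ≠ ⊤)
    (hv : v ∈ convexSubdiff g x) (w : X) : 0 ≤ secondSubderiv g x v w := by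
  obtain ⟨r, hr⟩ : ∃ r : ℝ, g x = r := ⟨(g x).toReal, (EReal.coe_toReal htop hbot).symm⟩
  refine le_liminf_of_le (by isBoundedDefault) ?_
  filter_upwards [eventually_mem_nhdsWithin.prod_inl _] with ⟨t, u⟩ (ht : 0 < t)
  have hsub : (r : EReal) + ((t * inner ℝ v u : ℝ) : EReal) ≤ g (x + t • u) := by
    simpa [hr, real_inner_smul_right] using hv (x + t • u)
  refine mul_nonneg (EReal.coe_nonneg.2 (by positivity)) ?_
  rw [hr, EReal.sub_nonneg (.inr (EReal.coe_ne_top _)) (.inr (EReal.coe_ne_bot _)),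
    EReal.le_sub_iff_add_le (.inl (EReal.coe_ne_bot _)) (.inl (EReal.coe_ne_top _)), add_comm]
  exact hsub

end Subgradient

section Hessian

variable {X : Type*} [NormedAddCommGroup X] [NormedSpace ℝ X] {φ : X → ℝ} {x w : X}

lemma iteratedFDeriv_two_apply_eq_zero_of_nonneg (hφ : IsSymmSndFDerivAt ℝ φ x)
    (hpsd : ∀ u, 0 ≤ iteratedFDeriv ℝ 2 φ x ![u, u]) (hw : iteratedFDeriv ℝ 2 φ x ![w, w] = 0)
    (u : X) : iteratedFDeriv ℝ 2 φ x ![w, u] = 0 := by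
  simp only [iteratedFDeriv_two_apply, Matrix.cons_val_zero, Matrix.cons_val_one] at hpsd hw ⊢
  have hcs := LinearMap.BilinForm.apply_mul_apply_le_of_forall_zero_le
    (fderiv ℝ (fderiv ℝ φ) x).toLinearMap₁₂ (by simpa using hpsd) w u
  simp only [ContinuousLinearMap.toLinearMap₁₂_apply_apply_apply, hw, zero_mul, hφ u w] at hcs
  exact mul_self_eq_zero.1 (le_antisymm hcs (mul_self_nonneg _))

lemma ContDiff.tendsto_iteratedFDeriv_two_apply_self (hφ : ContDiff ℝ 2 φ) {ι : Type*}
    {l : Filter ι} {y : ι → X} {u : ι → X} {y₀ u₀ : X} (hy : Tendsto y l (𝓝 y₀))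
    (hu : Tendsto u l (𝓝 u₀)) :
    Tendsto (fun k => iteratedFDeriv ℝ 2 φ (y k) ![u k, u k]) l
      (𝓝 (iteratedFDeriv ℝ 2 φ y₀ ![u₀, u₀])) := by
  have hD2cont := hφ.continuous_iteratedFDeriv (m := 2) le_rfl
  have hcont : Continuous fun p : X × X => iteratedFDeriv ℝ 2 φ p.1 ![p.2, p.2] := by fun_prop
  exact hcont.continuousAt.tendsto.comp (f := fun k => (y k, u k)) (hy.prodMk_nhds hu)

end Hessian

lemma ContDiff.continuous_gradient {X : Type*} [NormedAddCommGroup X] [InnerProductSpace ℝ X]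
    [CompleteSpace X] {φ : X → ℝ} {n : WithTop ℕ∞} (hφ : ContDiff ℝ n φ) (hn : n ≠ 0) :
    Continuous (gradient φ) := by
  have := hφ.continuous_fderiv hn
  unfold gradient
  fun_prop

lemma EReal.tendsto_zero_of_nonneg_of_le_one_div_succ {u : ℕ → EReal} (h0 : ∀ k, 0 ≤ u k)
    (hle : ∀ k, u k ≤ ((1 / ((k : ℝ) + 1) : ℝ) : EReal)) : Tendsto u atTop (𝓝 0) :=
  tendsto_of_tendsto_of_tendsto_of_le_of_le tendsto_const_nhds
    (EReal.tendsto_coe.2 tendsto_one_div_add_atTop_nhds_zero_nat) h0 hle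

theorem limit_in_kernel_and_W_general
    {X : Type*} [NormedAddCommGroup X] [InnerProductSpace ℝ X] [FiniteDimensional ℝ X]
    (φ : X → ℝ) (hφ : ContDiff ℝ 2 φ)
    (g : X → EReal)
    (hg_nebot : ∀ y, g y ≠ ⊥) (hg_netop : ∃ y, g y ≠ ⊤)
    (xbar : X) (N : Set X) (hxN : xbar ∈ N)
    (hpsd : ∀ x ∈ N, ∀ u : X, 0 ≤ iteratedFDeriv ℝ 2 φ x ![u, u])
    (xk vk wk : ℕ → X) (w : X)
    (hxkN : ∀ k, xk k ∈ N)
    (hgraph : ∀ k, vk k - gradient φ (xk k) ∈ convexSubdiff g (xk k))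
    (hxk : Filter.Tendsto xk atTop (nhds xbar))
    (hvk : Filter.Tendsto vk atTop (nhds (0 : X)))
    (hwk : Filter.Tendsto wk atTop (nhds w))
    (hlt : ∀ k : ℕ,
      ((iteratedFDeriv ℝ 2 φ (xk k) ![wk k, wk k] : ℝ) : EReal)
          + secondSubderiv g (xk k) (vk k - gradient φ (xk k)) (wk k)
        < ((1 / ((k : ℝ) + 1) : ℝ) : EReal)) :
    (∀ u : X, iteratedFDeriv ℝ 2 φ xbar ![w, u] = 0) ∧
    ∃ x' y' w' : ℕ → X,
      (∀ k, y' k ∈ convexSubdiff g (x' k)) ∧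
      Filter.Tendsto x' atTop (nhds xbar) ∧
      Filter.Tendsto y' atTop (nhds (-gradient φ xbar)) ∧
      Filter.Tendsto w' atTop (nhds w) ∧
      Filter.Tendsto (fun k => secondSubderiv g (x' k) (y' k) (w' k)) atTop
        (nhds (0 : EReal)) := by
  set A : ℕ → EReal := fun k => (iteratedFDeriv ℝ 2 φ (xk k) ![wk k, wk k] : ℝ)
  set D : ℕ → EReal := fun k => secondSubderiv g (xk k) (vk k - gradient φ (xk k)) (wk k)
  obtain ⟨y, hy⟩ := hg_netop
  have hA0 k : 0 ≤ A k := EReal.coe_nonneg.2 (hpsd _ (hxkN k) _)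
  have hD0 k : 0 ≤ D k := secondSubderiv_nonneg_of_mem_convexSubdiff (hg_nebot _)
    (ne_top_of_mem_convexSubdiff (hgraph k) hy) (hgraph k) _
  have hA_lim : Tendsto A atTop (𝓝 (iteratedFDeriv ℝ 2 φ xbar ![w, w] : ℝ)) :=
    EReal.tendsto_coe.2 (hφ.tendsto_iteratedFDeriv_two_apply_self hxk hwk)
  have hww : iteratedFDeriv ℝ 2 φ xbar ![w, w] = 0 := EReal.coe_eq_zero.1 <|
    tendsto_nhds_unique hA_lim <| EReal.tendsto_zero_of_nonneg_of_le_one_div_succ hA0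
      fun k => (le_add_of_nonneg_right (hD0 k)).trans (hlt k).le
  refine ⟨iteratedFDeriv_two_apply_eq_zero_of_nonneg
      (hφ.contDiffAt.isSymmSndFDerivAt (by simp)) (hpsd xbar hxN) hww,
    xk, fun k => vk k - gradient φ (xk k), wk, hgraph, hxk, ?_, hwk,
    EReal.tendsto_zero_of_nonneg_of_le_one_div_succ hD0
      fun k => (le_add_of_nonneg_left (hA0 k)).trans (hlt k).le⟩
  simpa using hvk.sub (((hφ.continuous_gradient two_ne_zero).tendsto xbar).comp hxk)

/-- Let `f = φ + g` with `φ` C², `∇²φ ⪰ 0` on an open neighborhood `N` of a local minimizer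
`x̄`, and `g` proper lsc convex.  For any sequences `(xᵏ, vᵏ) ∈ gph ∂f` with `xᵏ ∈ N`,
`(xᵏ, vᵏ) → (x̄, 0)`, and unit vectors `wᵏ → w` with
`⟪wᵏ, ∇²φ(xᵏ)wᵏ⟫ + d²g(xᵏ | vᵏ − ∇φ(xᵏ))(wᵏ) < 1/k`, the limit `w` lies in
`Ker ∇²φ(x̄)` and there are sequences witnessing `w ∈ 𝓦`, i.e. `(xᵏ, yᵏ) ∈ gph ∂g` and
`wᵏ → w` with `(xᵏ, yᵏ) → (x̄, −∇φ(x̄))` and `d²g(xᵏ|yᵏ)(wᵏ) → 0`. -/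
theorem limit_in_kernel_and_W
    {X : Type*} [NormedAddCommGroup X] [InnerProductSpace ℝ X] [FiniteDimensional ℝ X]
    (φ : X → ℝ) (hφ : ContDiff ℝ 2 φ)
    (g : X → EReal) (hg_lsc : LowerSemicontinuous g)
    (hg_nebot : ∀ y, g y ≠ ⊥) (hg_netop : ∃ y, g y ≠ ⊤)
    (hg_conv : ∀ x y : X, ∀ t : ℝ, 0 ≤ t → t ≤ 1 →
      g (t • x + (1 - t) • y) ≤ (t : EReal) * g x + ((1 - t : ℝ) : EReal) * g y)
    (xbar : X) (N : Set X) (hNopen : IsOpen N) (hxN : xbar ∈ N)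
    (hpsd : ∀ x ∈ N, ∀ u : X, 0 ≤ iteratedFDeriv ℝ 2 φ x ![u, u])
    (hmin : IsLocalMin (fun y => (φ y : EReal) + g y) xbar)
    (xk vk wk : ℕ → X) (w : X)
    (hxkN : ∀ k, xk k ∈ N)
    (hgraph : ∀ k, vk k - gradient φ (xk k) ∈ convexSubdiff g (xk k))
    (hxk : Filter.Tendsto xk atTop (nhds xbar))
    (hvk : Filter.Tendsto vk atTop (nhds (0 : X)))
    (hwk_norm : ∀ k, ‖wk k‖ = 1)
    (hwk : Filter.Tendsto wk atTop (nhds w))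
    (hlt : ∀ k : ℕ,
      ((iteratedFDeriv ℝ 2 φ (xk k) ![wk k, wk k] : ℝ) : EReal)
          + secondSubderiv g (xk k) (vk k - gradient φ (xk k)) (wk k)
        < ((1 / ((k : ℝ) + 1) : ℝ) : EReal)) :
    (∀ u : X, iteratedFDeriv ℝ 2 φ xbar ![w, u] = 0) ∧
    ∃ x' y' w' : ℕ → X,
      (∀ k, y' k ∈ convexSubdiff g (x' k)) ∧
      Filter.Tendsto x' atTop (nhds xbar) ∧
      Filter.Tendsto y' atTop (nhds (-gradient φ xbar)) ∧
      Filter.Tendsto w' atTop (nhds w) ∧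
      Filter.Tendsto (fun k => secondSubderiv g (x' k) (y' k) (w' k)) atTop
        (nhds (0 : EReal)) :=
  limit_in_kernel_and_W_general φ hφ g hg_nebot hg_netop xbar N hxN hpsd xk vk wk w hxkN hgraph hxk
    hvk hwk hlt
end
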